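/- If R is a nontrivial ring with the 2-nil-sum property that is not simple, then R is commutative. -/

import Mathlib

/-!
Every element of a proper two-sided ideal `I` is central: if `a ∈ I` and `1 + a = p + q` with
`p, q` nilpotent, then modulo `I` the nilpotent `q` equals the unit `1 - p`, forcing `I = R`.
Applied to annihilators of nonzero central elements, this shows that `d * x = 0` with `d ≠ 0`
central forces `x` to be central. Now take `0 ≠ a ∈ I` and a nilpotent `b`: the elements `a * b ^ n`
lie in `I`, hence are central, and if `b` were not central they would all be nonzero by induction,
contradicting `b ^ n = 0`. So nilpotents are central, and then so is every sum of two of them.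
-/

/-- A ring has the 2-nil-sum property if every element that is not a central unit
is a sum of two nilpotents. -/
def TwoNilSum (R : Type*) [Ring R] : Prop :=
  ∀ a : R, ¬ (a ∈ Set.center R ∧ IsUnit a) →
    ∃ b c : R, IsNilpotent b ∧ IsNilpotent c ∧ a = b + c

namespace TwoNilSum

variable {R : Type*} [Ring R]

theorem mem_center_of_mem (h : TwoNilSum R) {I : TwoSidedIdeal R} (hI : I ≠ ⊤) {a : R}
    (ha : a ∈ I) : a ∈ Set.center R := by
  have h1a : 1 + a ∈ Set.center R := by
    by_contra hc
    obtain ⟨p, q, hp, hq, hpq⟩ := h (1 + a) fun h' => hc h'.1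
    set f := I.ringCon.mk'
    have hfa : f a = 0 := (TwoSidedIdeal.mem_ker f).mp (I.ker_ringCon_mk'.symm ▸ ha)
    have hfq : f q = f (1 - p) := by
      rw [eq_sub_of_add_eq' hpq.symm, map_sub, map_add, hfa, add_zero, map_sub]
    have : Subsingleton I.ringCon.Quotient :=
      not_nontrivial_iff_subsingleton.mp fun _ =>
        (hq.map f).not_isUnit (hfq ▸ hp.isUnit_one_sub.map f)
    refine hI (I.one_mem_iff.mp ?_)
    rw [← I.ker_ringCon_mk', TwoSidedIdeal.mem_ker f]
    exact Subsingleton.elim _ _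
  simpa using Set.add_mem_center (Set.neg_mem_center Set.one_mem_center) h1a

def annihilatorOfMemCenter {d : R} (hd : d ∈ Set.center R) : TwoSidedIdeal R :=
  .mk' {x | d * x = 0} (mul_zero d) (fun hx hy => by simp_all [mul_add])
    (fun hx => by simp_all [mul_neg])
    (fun {x y} (hy : d * y = 0) => show d * (x * y) = 0 by
      rw [← mul_assoc, hd.comm x, mul_assoc, hy, mul_zero])
    (fun {x y} (hx : d * x = 0) => show d * (x * y) = 0 by rw [← mul_assoc, hx, zero_mul])

theorem mem_annihilatorOfMemCenter {d : R} (hd : d ∈ Set.center R) {x : R} :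
    x ∈ annihilatorOfMemCenter hd ↔ d * x = 0 :=
  TwoSidedIdeal.mem_mk' ..

theorem mem_center_of_mul_eq_zero (h : TwoNilSum R) {d x : R} (hd : d ∈ Set.center R)
    (hd0 : d ≠ 0) (hdx : d * x = 0) : x ∈ Set.center R := by
  refine h.mem_center_of_mem (fun htop => hd0 ?_) ((mem_annihilatorOfMemCenter hd).mpr hdx)
  have h1 : (1 : R) ∈ annihilatorOfMemCenter hd := htop ▸ TwoSidedIdeal.mem_top R
  simpa using (mem_annihilatorOfMemCenter hd).mp h1

theorem mem_center_of_isNilpotent (h : TwoNilSum R) {I : TwoSidedIdeal R} (hI : I ≠ ⊤) {a : R}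
    (ha : a ∈ I) (ha0 : a ≠ 0) {b : R} (hb : IsNilpotent b) : b ∈ Set.center R := by
  by_contra hbc
  have hne : ∀ n : ℕ, a * b ^ n ≠ 0 := by
    intro n
    induction n with
    | zero => simpa using ha0
    | succ n ih =>
      rw [pow_succ, ← mul_assoc]
      exact fun hzero => hbc <| h.mem_center_of_mul_eq_zero
        (h.mem_center_of_mem hI (I.mul_mem_right _ _ ha)) ih hzero
  obtain ⟨n, hn⟩ := hb
  exact hne n (by rw [hn, mul_zero])

theorem mem_center (h : TwoNilSum R) {I : TwoSidedIdeal R} (hI : I ≠ ⊤) {a : R}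
    (ha : a ∈ I) (ha0 : a ≠ 0) (x : R) : x ∈ Set.center R := by
  by_cases hx : x ∈ Set.center R ∧ IsUnit x
  · exact hx.1
  obtain ⟨p, q, hp, hq, rfl⟩ := h x hx
  exact Set.add_mem_center (h.mem_center_of_isNilpotent hI ha ha0 hp)
    (h.mem_center_of_isNilpotent hI ha ha0 hq)

end TwoNilSum

theorem exists_mem_ne_zero_of_not_isSimpleRing {R : Type*} [Ring R] [Nontrivial R]
    (hs : ¬ IsSimpleRing R) : ∃ I : TwoSidedIdeal R, I ≠ ⊤ ∧ ∃ a ∈ I, a ≠ 0 := by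
  contrapose! hs
  exact .of_eq_bot_or_eq_top fun I => or_iff_not_imp_right.mpr fun hI =>
    eq_bot_iff.mpr fun x hx => (TwoSidedIdeal.mem_bot R).mpr (hs I hI x hx)

theorem stmt_7_general (R : Type*) [Ring R] (h : TwoNilSum R)
    (hs : ¬ IsSimpleRing R) : ∀ a b : R, a * b = b * a := by
  intro x y
  cases subsingleton_or_nontrivial R
  · exact Subsingleton.elim _ _
  obtain ⟨I, hI, a, ha, ha0⟩ := exists_mem_ne_zero_of_not_isSimpleRing hs
  exact ((h.mem_center hI ha ha0 x).comm y).eq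

theorem stmt_7 (R : Type*) [Ring R] [Nontrivial R] (h : TwoNilSum R)
    (hs : ¬ IsSimpleRing R) : ∀ a b : R, a * b = b * a :=
  stmt_7_general R h hs
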